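/- For every 1 ≤ j ≤ n, the element X_j is central in the type B_n zigzag algebra 𝓑_n; moreover, for every 2 ≤ j ≤ n the element (ie_j)X_j is central in 𝓑_n. -/
import Mathlib


open scoped TensorProduct

namespace ZZ

/-- Generators of the quiver `Q_n`: constant paths, arrows `(j|j+1)` (up),
arrows `(j+1|j)` (down), and the loops `ie_j`. -/
inductive Gen : Type
  | e (j : ℕ)
  | up (j : ℕ)
  | dn (j : ℕ)
  | lp (j : ℕ)

noncomputable section

/-- The constant path `e_j` in the free algebra. -/
def Ef (j : ℕ) : FreeAlgebra ℝ Gen := FreeAlgebra.ι ℝ (Gen.e j)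
/-- The arrow `(j|j+1)` in the free algebra. -/
def Uf (j : ℕ) : FreeAlgebra ℝ Gen := FreeAlgebra.ι ℝ (Gen.up j)
/-- The arrow `(j+1|j)` in the free algebra. -/
def Df (j : ℕ) : FreeAlgebra ℝ Gen := FreeAlgebra.ι ℝ (Gen.dn j)
/-- The loop `ie_j` in the free algebra. -/
def Lf (j : ℕ) : FreeAlgebra ℝ Gen := FreeAlgebra.ι ℝ (Gen.lp j)

/-- `X_j := (j|j+1)(j+1|j)` for `j < n` and `X_n := (n|n-1)(n-1|n)`.
Multiplication is composition of paths read left to right. -/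
def XFf (n j : ℕ) : FreeAlgebra ℝ Gen :=
  if j = n then Df (n-1) * Uf (n-1) else Uf j * Df j

/-- The defining relations of the type `B_n` zigzag algebra, together with the
path-algebra relations of the quiver `Q_n` (orthogonal idempotents `e_j` summing
to `1`, source/target relations for the arrows and loops; generators indexed
outside of `{1, …, n}` are set to zero). -/
inductive rel (n : ℕ) : FreeAlgebra ℝ Gen → FreeAlgebra ℝ Gen → Prop
  | idem (j : ℕ) : rel n (Ef j * Ef j) (Ef j)
  | orth (j k : ℕ) (h : j ≠ k) : rel n (Ef j * Ef k) 0
  | sum_idem : rel n (∑ j ∈ Finset.Icc 1 n, Ef j) 1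
  | e_out (j : ℕ) (h : j = 0 ∨ n < j) : rel n (Ef j) 0
  | up_src (j : ℕ) : rel n (Ef j * Uf j) (Uf j)
  | up_tgt (j : ℕ) : rel n (Uf j * Ef (j+1)) (Uf j)
  | up_out (j : ℕ) (h : j = 0 ∨ n ≤ j) : rel n (Uf j) 0
  | dn_src (j : ℕ) : rel n (Ef (j+1) * Df j) (Df j)
  | dn_tgt (j : ℕ) : rel n (Df j * Ef j) (Df j)
  | dn_out (j : ℕ) (h : j = 0 ∨ n ≤ j) : rel n (Df j) 0
  | lp_src (j : ℕ) : rel n (Ef j * Lf j) (Lf j)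
  | lp_tgt (j : ℕ) : rel n (Lf j * Ef j) (Lf j)
  | lp_out (j : ℕ) (h : j ≤ 1 ∨ n < j) : rel n (Lf j) 0
  /- the zigzag relation `(j|j-1)(j-1|j) = (j|j+1)(j+1|j)` for `2 ≤ j ≤ n-1`,
  written here with `j` replaced by `j+1`. -/
  | zig (j : ℕ) (h1 : 1 ≤ j) (h2 : j + 1 ≤ n - 1) :
      rel n (Df j * Uf j) (Uf (j+1) * Df (j+1))
  /- `(j-1|j)(j|j+1) = 0` for `2 ≤ j ≤ n-1`, with `j` replaced by `j+1`. -/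
  | uu (j : ℕ) (h1 : 1 ≤ j) (h2 : j + 1 ≤ n - 1) : rel n (Uf j * Uf (j+1)) 0
  /- `(j+1|j)(j|j-1) = 0` for `2 ≤ j ≤ n-1`, with `j` replaced by `j+1`. -/
  | dd (j : ℕ) (h1 : 1 ≤ j) (h2 : j + 1 ≤ n - 1) : rel n (Df (j+1) * Df j) 0
  /- `(ie_j)(ie_j) = -e_j` for `j ≥ 2`. -/
  | lsq (j : ℕ) (h1 : 2 ≤ j) (h2 : j ≤ n) : rel n (Lf j * Lf j) (-(Ef j))
  /- `(ie_{j-1})(j-1|j) = (j-1|j)(ie_j)` for `j ≥ 3`, with `j` replaced by `j+1`. -/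
  | lu (j : ℕ) (h1 : 2 ≤ j) (h2 : j + 1 ≤ n) : rel n (Lf j * Uf j) (Uf j * Lf (j+1))
  /- `(ie_j)(j|j-1) = (j|j-1)(ie_{j-1})` for `j ≥ 3`, with `j` replaced by `j+1`. -/
  | ld (j : ℕ) (h1 : 2 ≤ j) (h2 : j + 1 ≤ n) : rel n (Lf (j+1) * Df j) (Df j * Lf j)
  /- `(1|2)(ie_2)(2|1) = 0`. -/
  | uld : rel n (Uf 1 * Lf 2 * Df 1) 0
  /- `(ie_2) X_2 = X_2 (ie_2)`. -/
  | lx2 : rel n (Lf 2 * XFf n 2) (XFf n 2 * Lf 2)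

/-- The type `B_n` zigzag algebra `𝓑_n`. -/
abbrev B (n : ℕ) := RingQuot (rel n)

/-- The quotient map from the path algebra. -/
def π (n : ℕ) : FreeAlgebra ℝ Gen →ₐ[ℝ] B n := RingQuot.mkAlgHom ℝ (rel n)

/-- The idempotent `e_j` in `𝓑_n`. -/
def e (n j : ℕ) : B n := π n (Ef j)
/-- The arrow `(j|j+1)` in `𝓑_n`. -/
def u (n j : ℕ) : B n := π n (Uf j)
/-- The arrow `(j+1|j)` in `𝓑_n`. -/
def d (n j : ℕ) : B n := π n (Df j)
/-- The loop `ie_j` in `𝓑_n`. -/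
def l (n j : ℕ) : B n := π n (Lf j)
/-- The element `X_j` of `𝓑_n`. -/
def x (n j : ℕ) : B n := π n (XFf n j)

lemma rel_eq {n : ℕ} {a b : FreeAlgebra ℝ Gen} (h : rel n a b) : π n a = π n b :=
  RingQuot.mkAlgHom_rel ℝ h

/-- The weight (path-length degree) of a generator: arrows have degree `1`,
constant paths and the loops `ie_j` have degree `0`. -/
def wt : Gen → ℤ
  | Gen.up _ => 1
  | Gen.dn _ => 1
  | _ => 0

/-- The degree-`k` component of `𝓑_n` for the path-length grading: the span of
the images of all homogeneous monomials of total weight `k`. -/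
def gB (n : ℕ) (k : ℤ) : Submodule ℝ (B n) :=
  Submodule.span ℝ
    {z | ∃ w : List Gen, (w.map wt).sum = k ∧
      z = (w.map (fun g => π n (FreeAlgebra.ι ℝ g))).prod}

/-! ### Auxiliary lemmas -/

lemma rEE (n j : ℕ) : e n j * e n j = e n j := by
  simpa [e, map_mul] using rel_eq (rel.idem (n := n) j)

lemma rEO (n : ℕ) {j k : ℕ} (h : j ≠ k) : e n j * e n k = 0 := by
  simpa [e, map_mul] using rel_eq (rel.orth (n := n) j k h)

lemma rEU (n j : ℕ) : e n j * u n j = u n j := by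
  simpa [e, u, map_mul] using rel_eq (rel.up_src (n := n) j)

lemma rUE (n j : ℕ) : u n j * e n (j+1) = u n j := by
  simpa [e, u, map_mul] using rel_eq (rel.up_tgt (n := n) j)

lemma rU0 (n j : ℕ) (h : j = 0 ∨ n ≤ j) : u n j = 0 := by
  simpa [u] using rel_eq (rel.up_out (n := n) j h)

lemma rED (n j : ℕ) : e n (j+1) * d n j = d n j := by
  simpa [e, d, map_mul] using rel_eq (rel.dn_src (n := n) j)

lemma rDE (n j : ℕ) : d n j * e n j = d n j := by
  simpa [e, d, map_mul] using rel_eq (rel.dn_tgt (n := n) j)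

lemma rD0 (n j : ℕ) (h : j = 0 ∨ n ≤ j) : d n j = 0 := by
  simpa [d] using rel_eq (rel.dn_out (n := n) j h)

lemma rEL (n j : ℕ) : e n j * l n j = l n j := by
  simpa [e, l, map_mul] using rel_eq (rel.lp_src (n := n) j)

lemma rLE (n j : ℕ) : l n j * e n j = l n j := by
  simpa [e, l, map_mul] using rel_eq (rel.lp_tgt (n := n) j)

lemma rL0 (n j : ℕ) (h : j ≤ 1 ∨ n < j) : l n j = 0 := by
  simpa [l] using rel_eq (rel.lp_out (n := n) j h)

lemma rZig (n j : ℕ) (h1 : 1 ≤ j) (h2 : j + 1 ≤ n - 1) :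
    d n j * u n j = u n (j+1) * d n (j+1) := by
  simpa [u, d, map_mul] using rel_eq (rel.zig (n := n) j h1 h2)

lemma rUU (n j : ℕ) (h1 : 1 ≤ j) (h2 : j + 1 ≤ n - 1) : u n j * u n (j+1) = 0 := by
  simpa [u, map_mul] using rel_eq (rel.uu (n := n) j h1 h2)

lemma rDD (n j : ℕ) (h1 : 1 ≤ j) (h2 : j + 1 ≤ n - 1) : d n (j+1) * d n j = 0 := by
  simpa [d, map_mul] using rel_eq (rel.dd (n := n) j h1 h2)

lemma rLsq (n j : ℕ) (h1 : 2 ≤ j) (h2 : j ≤ n) : l n j * l n j = -(e n j) := by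
  simpa [e, l, map_mul] using rel_eq (rel.lsq (n := n) j h1 h2)

lemma rLU (n j : ℕ) (h1 : 2 ≤ j) (h2 : j + 1 ≤ n) :
    l n j * u n j = u n j * l n (j+1) := by
  simpa [u, l, map_mul] using rel_eq (rel.lu (n := n) j h1 h2)

lemma rLD (n j : ℕ) (h1 : 2 ≤ j) (h2 : j + 1 ≤ n) :
    l n (j+1) * d n j = d n j * l n j := by
  simpa [d, l, map_mul] using rel_eq (rel.ld (n := n) j h1 h2)

lemma rULD (n : ℕ) : u n 1 * l n 2 * d n 1 = 0 := by
  simpa [u, l, d, map_mul] using rel_eq (rel.uld (n := n))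

lemma rLX2 (n : ℕ) : l n 2 * x n 2 = x n 2 * l n 2 := by
  simpa [l, x, map_mul] using rel_eq (rel.lx2 (n := n))

lemma loc {n : ℕ} {a b : B n} {p q : ℕ} (h : p ≠ q)
    (ha : a * e n p = a) (hb : e n q * b = b) : a * b = 0 := by
  rw [← ha, ← hb, mul_assoc, ← mul_assoc (e n p), rEO n h, zero_mul, mul_zero]

lemma x_lt (n j : ℕ) (h : j ≠ n) : x n j = u n j * d n j := by
  simp only [x, XFf, if_neg h, map_mul, u, d]

lemma x_top (n : ℕ) : x n n = d n (n-1) * u n (n-1) := by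
  unfold x XFf
  rw [if_pos rfl, map_mul]
  rfl

lemma x_succ (n j : ℕ) (h1 : 1 ≤ j) (h2 : j + 1 ≤ n) :
    x n (j+1) = d n j * u n j := by
  by_cases h : j + 1 = n
  · rw [h, x_top]
    have hh : n - 1 = j := by omega
    rw [hh]
  · rw [x_lt n (j+1) h]
    exact (rZig n j h1 (by omega)).symm

lemma xe (n : ℕ) {j : ℕ} (h1 : 1 ≤ j) (h2 : j ≤ n) : x n j * e n j = x n j := by
  by_cases h : j = n
  · subst h
    obtain ⟨m, rfl⟩ : ∃ m, j = m + 1 := ⟨j - 1, by omega⟩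
    rw [x_top]
    simp only [Nat.add_sub_cancel]
    rw [mul_assoc, rUE]
  · rw [x_lt n j h, mul_assoc, rDE]

lemma ex (n : ℕ) {j : ℕ} (h1 : 1 ≤ j) (h2 : j ≤ n) : e n j * x n j = x n j := by
  by_cases h : j = n
  · subst h
    obtain ⟨m, rfl⟩ : ∃ m, j = m + 1 := ⟨j - 1, by omega⟩
    rw [x_top]
    simp only [Nat.add_sub_cancel]
    rw [← mul_assoc, rED]
  · rw [x_lt n j h, ← mul_assoc, rEU]

lemma udu (n : ℕ) {j : ℕ} (h1 : 1 ≤ j) (h2 : j + 1 ≤ n) :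
    u n j * (d n j * u n j) = 0 := by
  by_cases h : j + 1 = n
  · rcases Nat.lt_or_ge j 2 with hj | hj
    · -- j = 1, n = 2
      have hj1 : j = 1 := by omega
      subst hj1
      have hX : x n 2 = d n 1 * u n 1 := x_succ n 1 le_rfl h2
      rw [← hX]
      have k1 : x n 2 * l n 2 = l n 2 * x n 2 := (rLX2 n).symm
      have hz : u n 1 * x n 2 * (l n 2 * l n 2) = 0 := by
        calc u n 1 * x n 2 * (l n 2 * l n 2)
            = u n 1 * (x n 2 * l n 2) * l n 2 := by noncomm_ring
          _ = u n 1 * (l n 2 * x n 2) * l n 2 := by rw [k1]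
          _ = u n 1 * (l n 2 * (d n 1 * u n 1)) * l n 2 := by rw [hX]
          _ = (u n 1 * l n 2 * d n 1) * (u n 1 * l n 2) := by noncomm_ring
          _ = 0 := by rw [rULD n, zero_mul]
      have hxe : x n 2 * e n 2 = x n 2 := xe n (by omega) (by omega)
      calc u n 1 * x n 2 = u n 1 * x n 2 * e n 2 := by rw [mul_assoc, hxe]
        _ = 0 := by
            have hneg : u n 1 * x n 2 * (l n 2 * l n 2)
                = -(u n 1 * x n 2 * e n 2) := by
              rw [rLsq n 2 le_rfl (by omega)]; exact mul_neg (u n 1 * x n 2) (e n 2)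
            rw [hz] at hneg
            exact (neg_eq_zero.mp hneg.symm)
    · -- 2 ≤ j, j + 1 = n
      obtain ⟨m, rfl⟩ : ∃ m, j = m + 1 := ⟨j - 1, by omega⟩
      rw [← mul_assoc, ← rZig n m (by omega) (by omega), mul_assoc,
        rUU n m (by omega) (by omega), mul_zero]
  · rw [rZig n j h1 (by omega), ← mul_assoc, rUU n j h1 (by omega), zero_mul]

lemma dud (n : ℕ) {j : ℕ} (h1 : 1 ≤ j) (h2 : j + 1 ≤ n) :
    d n j * u n j * d n j = 0 := by
  by_cases h : j + 1 = n
  · rcases Nat.lt_or_ge j 2 with hj | hj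
    · -- j = 1, n = 2
      have hj1 : j = 1 := by omega
      subst hj1
      have hX : x n 2 = d n 1 * u n 1 := x_succ n 1 le_rfl h2
      rw [← hX]
      have hz : (l n 2 * l n 2) * (x n 2 * d n 1) = 0 := by
        calc (l n 2 * l n 2) * (x n 2 * d n 1)
            = l n 2 * (l n 2 * x n 2) * d n 1 := by noncomm_ring
          _ = l n 2 * (x n 2 * l n 2) * d n 1 := by rw [rLX2 n]
          _ = l n 2 * ((d n 1 * u n 1) * l n 2) * d n 1 := by rw [hX]
          _ = (l n 2 * d n 1) * (u n 1 * l n 2 * d n 1) := by noncomm_ring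
          _ = 0 := by rw [rULD n, mul_zero]
      have hxe : e n 2 * x n 2 = x n 2 := ex n (by omega) (by omega)
      calc x n 2 * d n 1 = e n 2 * (x n 2 * d n 1) := by rw [← mul_assoc, hxe]
        _ = 0 := by
            have hneg : (l n 2 * l n 2) * (x n 2 * d n 1)
                = -(e n 2 * (x n 2 * d n 1)) := by
              rw [rLsq n 2 le_rfl (by omega)]; exact neg_mul (e n 2) (x n 2 * d n 1)
            rw [hz] at hneg
            exact (neg_eq_zero.mp hneg.symm)
    · -- 2 ≤ j, j + 1 = n
      obtain ⟨m, rfl⟩ : ∃ m, j = m + 1 := ⟨j - 1, by omega⟩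
      rw [mul_assoc, ← rZig n m (by omega) (by omega), ← mul_assoc,
        rDD n m (by omega) (by omega), zero_mul]
  · rw [rZig n j h1 (by omega), mul_assoc, rDD n j h1 (by omega), mul_zero]

lemma xu0 (n : ℕ) {j : ℕ} (h1 : 1 ≤ j) (h2 : j + 1 ≤ n) : x n j * u n j = 0 := by
  rw [x_lt n j (by omega), mul_assoc]
  exact udu n h1 h2

lemma ux0 (n : ℕ) {k : ℕ} (h1 : 1 ≤ k) (h2 : k + 1 ≤ n) :
    u n k * x n (k+1) = 0 := by
  rw [x_succ n k h1 h2]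
  exact udu n h1 h2

lemma xd0 (n : ℕ) {k : ℕ} (h1 : 1 ≤ k) (h2 : k + 1 ≤ n) :
    x n (k+1) * d n k = 0 := by
  rw [x_succ n k h1 h2]
  exact dud n h1 h2

lemma dx0 (n : ℕ) {j : ℕ} (h1 : 1 ≤ j) (h2 : j + 1 ≤ n) : d n j * x n j = 0 := by
  rw [x_lt n j (by omega), ← mul_assoc]
  exact dud n h1 h2

lemma xu_all (n : ℕ) {j : ℕ} (h1 : 1 ≤ j) (h2 : j ≤ n) (k : ℕ) :
    x n j * u n k = 0 := by
  by_cases hk : k = j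
  · rw [hk]
    by_cases hj : j = n
    · rw [hj, rU0 n n (Or.inr le_rfl), mul_zero]
    · exact xu0 n h1 (by omega)
  · exact loc (Ne.symm hk) (xe n h1 h2) (rEU n k)

lemma ux_all (n : ℕ) {j : ℕ} (h1 : 1 ≤ j) (h2 : j ≤ n) (k : ℕ) :
    u n k * x n j = 0 := by
  by_cases hk : k + 1 = j
  · rw [← hk]
    rcases Nat.eq_zero_or_pos k with h0 | h0
    · rw [h0, rU0 n 0 (Or.inl rfl), zero_mul]
    · exact ux0 n h0 (by omega)
  · exact loc hk (rUE n k) (ex n h1 h2)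

lemma xd_all (n : ℕ) {j : ℕ} (h1 : 1 ≤ j) (h2 : j ≤ n) (k : ℕ) :
    x n j * d n k = 0 := by
  by_cases hk : k + 1 = j
  · rw [← hk]
    rcases Nat.eq_zero_or_pos k with h0 | h0
    · rw [h0, rD0 n 0 (Or.inl rfl), mul_zero]
    · exact xd0 n h0 (by omega)
  · exact loc (Ne.symm hk) (xe n h1 h2) (rED n k)

lemma dx_all (n : ℕ) {j : ℕ} (h1 : 1 ≤ j) (h2 : j ≤ n) (k : ℕ) :
    d n k * x n j = 0 := by
  by_cases hk : k = j
  · rw [hk]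
    by_cases hj : j = n
    · rw [hj, rD0 n n (Or.inr le_rfl), zero_mul]
    · exact dx0 n h1 (by omega)
  · exact loc hk (rDE n k) (ex n h1 h2)

lemma lx (n : ℕ) {j : ℕ} (h1 : 2 ≤ j) (h2 : j ≤ n) :
    l n j * x n j = x n j * l n j := by
  by_cases hjn : j = n
  · by_cases hj2 : j = 2
    · rw [hj2]; exact rLX2 n
    · subst hjn
      obtain ⟨m, rfl⟩ : ∃ m, j = m + 1 := ⟨j - 1, by omega⟩
      have hm : 2 ≤ m := by omega
      rw [x_top]
      simp only [Nat.add_sub_cancel]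
      calc l (m+1) (m+1) * (d (m+1) m * u (m+1) m)
          = (l (m+1) (m+1) * d (m+1) m) * u (m+1) m := by rw [mul_assoc]
        _ = (d (m+1) m * l (m+1) m) * u (m+1) m := by rw [rLD (m+1) m hm le_rfl]
        _ = d (m+1) m * (l (m+1) m * u (m+1) m) := by rw [mul_assoc]
        _ = d (m+1) m * (u (m+1) m * l (m+1) (m+1)) := by rw [rLU (m+1) m hm le_rfl]
        _ = d (m+1) m * u (m+1) m * l (m+1) (m+1) := by rw [mul_assoc]
  · rw [x_lt n j hjn]
    calc l n j * (u n j * d n j)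
        = (l n j * u n j) * d n j := by rw [mul_assoc]
      _ = (u n j * l n (j+1)) * d n j := by rw [rLU n j h1 (by omega)]
      _ = u n j * (l n (j+1) * d n j) := by rw [mul_assoc]
      _ = u n j * (d n j * l n j) := by rw [rLD n j h1 (by omega)]
      _ = u n j * d n j * l n j := by rw [mul_assoc]

lemma xl_all (n : ℕ) {j : ℕ} (h1 : 1 ≤ j) (h2 : j ≤ n) (k : ℕ) :
    x n j * l n k = l n k * x n j := by
  by_cases hk : k = j
  · subst hk
    by_cases hk2 : 2 ≤ k
    · exact (lx n hk2 h2).symm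
    · rw [rL0 n k (Or.inl (by omega)), mul_zero, zero_mul]
  · rw [loc (Ne.symm hk) (xe n h1 h2) (rEL n k), loc hk (rLE n k) (ex n h1 h2)]

lemma xe_all (n : ℕ) {j : ℕ} (h1 : 1 ≤ j) (h2 : j ≤ n) (k : ℕ) :
    x n j * e n k = e n k * x n j := by
  by_cases hk : k = j
  · rw [hk, xe n h1 h2, ex n h1 h2]
  · rw [loc (Ne.symm hk) (xe n h1 h2) (rEE n k), loc hk (rEE n k) (ex n h1 h2)]

lemma ulx (n : ℕ) {k : ℕ} (h1 : 1 ≤ k) (h2 : k + 1 ≤ n) :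
    u n k * (l n (k+1) * x n (k+1)) = 0 := by
  by_cases hk2 : 2 ≤ k
  · rw [← mul_assoc, ← rLU n k hk2 h2, mul_assoc, ux0 n h1 h2, mul_zero]
  · have hk1 : k = 1 := by omega
    subst hk1
    by_cases hn2 : n = 2
    · rw [x_succ n 1 le_rfl h2]
      calc u n 1 * (l n 2 * (d n 1 * u n 1))
          = (u n 1 * l n 2 * d n 1) * u n 1 := by noncomm_ring
        _ = 0 := by rw [rULD n, zero_mul]
    · rw [x_lt n 2 (by omega)]
      calc u n 1 * (l n 2 * (u n 2 * d n 2))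
          = u n 1 * ((l n 2 * u n 2) * d n 2) := by noncomm_ring
        _ = u n 1 * ((u n 2 * l n 3) * d n 2) := by
            rw [rLU n 2 le_rfl (by omega)]
        _ = (u n 1 * u n 2) * (l n 3 * d n 2) := by noncomm_ring
        _ = 0 := by rw [rUU n 1 le_rfl (by omega), zero_mul]

lemma central {n : ℕ} (z : B n)
    (he : ∀ k, z * e n k = e n k * z) (hu : ∀ k, z * u n k = u n k * z)
    (hd : ∀ k, z * d n k = d n k * z) (hl : ∀ k, z * l n k = l n k * z) :
    ∀ a : B n, z * a = a * z := by
  intro a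
  obtain ⟨b, rfl⟩ := RingQuot.mkAlgHom_surjective ℝ (rel n) a
  induction b using FreeAlgebra.induction with
  | grade0 r =>
      rw [AlgHom.commutes]
      exact (Algebra.commutes r z).symm
  | grade1 g =>
      cases g with
      | e j => exact he j
      | up j => exact hu j
      | dn j => exact hd j
      | lp j => exact hl j
  | mul p q hp hq =>
      rw [map_mul, ← mul_assoc, hp, mul_assoc, hq, mul_assoc]
  | add p q hp hq =>
      rw [map_add, mul_add, add_mul, hp, hq]

/-- For every `1 ≤ j ≤ n`, the element `X_j` is central in the
type `B_n` zigzag algebra `𝓑_n`; moreover, for every `2 ≤ j ≤ n` the element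
`(ie_j) X_j` is central in `𝓑_n`. -/
theorem x_central (n : ℕ) (hn : 2 ≤ n) :
    (∀ j, 1 ≤ j → j ≤ n → ∀ a : B n, x n j * a = a * x n j) ∧
    (∀ j, 2 ≤ j → j ≤ n → ∀ a : B n, (l n j * x n j) * a = a * (l n j * x n j)) := by
  constructor
  · intro j hj1 hj2 a
    refine central (x n j) (fun k => ?_) (fun k => ?_) (fun k => ?_) (fun k => ?_) a
    · exact xe_all n hj1 hj2 k
    · rw [xu_all n hj1 hj2 k, ux_all n hj1 hj2 k]
    · rw [xd_all n hj1 hj2 k, dx_all n hj1 hj2 k]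
    · exact xl_all n hj1 hj2 k
  · intro j hj1 hj2 a
    have hj1' : 1 ≤ j := by omega
    have hze : (l n j * x n j) * e n j = l n j * x n j := by
      rw [mul_assoc, xe n hj1' hj2]
    have hez : e n j * (l n j * x n j) = l n j * x n j := by
      rw [← mul_assoc, rEL n j]
    refine central (l n j * x n j) (fun k => ?_) (fun k => ?_) (fun k => ?_)
      (fun k => ?_) a
    · -- e
      by_cases hk : k = j
      · rw [hk, hze, hez]
      · rw [loc (Ne.symm hk) hze (rEE n k), loc hk (rEE n k) hez]
    · -- u
      have L : (l n j * x n j) * u n k = 0 := by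
        rw [mul_assoc, xu_all n hj1' hj2 k, mul_zero]
      have R : u n k * (l n j * x n j) = 0 := by
        by_cases hk : k + 1 = j
        · subst hk
          exact ulx n (by omega) (by omega)
        · exact loc hk (rUE n k) hez
      rw [L, R]
    · -- d
      have L : (l n j * x n j) * d n k = 0 := by
        rw [mul_assoc, xd_all n hj1' hj2 k, mul_zero]
      have R : d n k * (l n j * x n j) = 0 := by
        by_cases hk : k = j
        · subst hk
          by_cases hkn : k = n
          · rw [hkn, rD0 n n (Or.inr le_rfl), zero_mul]
          · rw [← mul_assoc, ← rLD n k hj1 (by omega), mul_assoc,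
              dx0 n (by omega) (by omega), mul_zero]
        · exact loc hk (rDE n k) hez
      rw [L, R]
    · -- l
      by_cases hk : k = j
      · subst hk
        calc l n k * x n k * l n k
            = l n k * (x n k * l n k) := by rw [mul_assoc]
          _ = l n k * (l n k * x n k) := by rw [← lx n hj1 hj2]
      · rw [loc (Ne.symm hk) hze (rEL n k), loc hk (rLE n k) hez]

end
end ZZ
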